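/- Let N^{αβμν} (α, β, μ, ν ∈ {0,1,2}) be real constants satisfying Σ_{α,β,μ,ν} N^{αβμν} ξ_α ξ_β ξ_μ ξ_ν = 0 for all ξ = (ξ₀, ξ₁, ξ₂) with ξ₀ ∈ {±1} and (ξ₁, ξ₂) on the unit circle. Then there is a constant C > 0 (depending only on the N^{αβμν}) such that for all C¹ functions f, g, h, φ on ℝ × ℝ² and all (t, x) with x ≠ 0, |Σ_{α,β,μ,ν} N^{αβμν} ∂_α f ∂_β g ∂_μ h ∂_ν φ| ≤ C ( |∂̄f||∂g||∂h||∂φ| + |∂f||∂̄g||∂h||∂φ| + |∂f||∂g||∂̄h||∂φ| + |∂f||∂g||∂h||∂̄φ| ), where ∂₀ = ∂ₜ and ∂̄ᵢ = ∂ᵢ + (xᵢ/|x|)∂ₜ. -/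

import Mathlib

open Real BigOperators

/-- directional partial derivative on ℝ × ℝ² ≅ ℝ × ℝ × ℝ -/
noncomputable def pd (v : ℝ × ℝ × ℝ) (f : ℝ × ℝ × ℝ → ℝ) (p : ℝ × ℝ × ℝ) : ℝ :=
  fderiv ℝ f p v

/-- the coordinate directions ∂₀ = ∂ₜ, ∂₁, ∂₂ -/
def e : Fin 3 → ℝ × ℝ × ℝ := ![(1, 0, 0), (0, 1, 0), (0, 0, 1)]

/-- |x| for p = (t, x₁, x₂) -/
noncomputable def nrm (p : ℝ × ℝ × ℝ) : ℝ := Real.sqrt (p.2.1 ^ 2 + p.2.2 ^ 2)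

/-- the good derivative ∂̄₁ f = ∂₁ f + (x₁/|x|) ∂ₜ f -/
noncomputable def bd1 (f : ℝ × ℝ × ℝ → ℝ) (p : ℝ × ℝ × ℝ) : ℝ :=
  pd (e 1) f p + (p.2.1 / nrm p) * pd (e 0) f p

/-- the good derivative ∂̄₂ f = ∂₂ f + (x₂/|x|) ∂ₜ f -/
noncomputable def bd2 (f : ℝ × ℝ × ℝ → ℝ) (p : ℝ × ℝ × ℝ) : ℝ :=
  pd (e 2) f p + (p.2.2 / nrm p) * pd (e 0) f p

/-- |∂f| = (|∂ₜf|² + |∂₁f|² + |∂₂f|²)^{1/2} -/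
noncomputable def gradNorm (f : ℝ × ℝ × ℝ → ℝ) (p : ℝ × ℝ × ℝ) : ℝ :=
  Real.sqrt ((pd (e 0) f p) ^ 2 + (pd (e 1) f p) ^ 2 + (pd (e 2) f p) ^ 2)

/-- |∂̄f| = (|∂̄₁f|² + |∂̄₂f|²)^{1/2} -/
noncomputable def barNorm (f : ℝ × ℝ × ℝ → ℝ) (p : ℝ × ℝ × ℝ) : ℝ :=
  Real.sqrt ((bd1 f p) ^ 2 + (bd2 f p) ^ 2)

/-- null direction at p -/
noncomputable def xi (p : ℝ × ℝ × ℝ) : Fin 3 → ℝ :=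
  ![1, -(p.2.1 / nrm p), -(p.2.2 / nrm p)]

/-- good-derivative part of the gradient -/
noncomputable def Yv (q : ℝ × ℝ × ℝ → ℝ) (p : ℝ × ℝ × ℝ) : Fin 3 → ℝ :=
  ![0, bd1 q p, bd2 q p]

lemma xi_decomp (q : ℝ × ℝ × ℝ → ℝ) (p : ℝ × ℝ × ℝ) (α : Fin 3) :
    pd (e α) q p = pd (e 0) q p * xi p α + Yv q p α := by
  fin_cases α <;> simp [xi, Yv, bd1, bd2] <;> ring

lemma nrm_sq (p : ℝ × ℝ × ℝ) (hp : p.2 ≠ 0) :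
    0 < nrm p ∧ nrm p ^ 2 = p.2.1 ^ 2 + p.2.2 ^ 2 := by
  have h2 : p.2.1 ≠ 0 ∨ p.2.2 ≠ 0 := by
    by_contra hc
    push_neg at hc
    exact hp (Prod.ext hc.1 hc.2)
  have hpos : 0 < p.2.1 ^ 2 + p.2.2 ^ 2 := by rcases h2 with h | h <;> positivity
  exact ⟨Real.sqrt_pos.mpr hpos, Real.sq_sqrt hpos.le⟩

lemma xi_circle (p : ℝ × ℝ × ℝ) (hp : p.2 ≠ 0) :
    (xi p 1) ^ 2 + (xi p 2) ^ 2 = 1 := by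
  obtain ⟨hn, hsq⟩ := nrm_sq p hp
  simp only [xi, Matrix.cons_val_one, Matrix.head_cons, Matrix.cons_val_two, Matrix.tail_cons, Matrix.cons_val_zero]
  field_simp
  linarith

lemma xi_le (p : ℝ × ℝ × ℝ) (hp : p.2 ≠ 0) (α : Fin 3) : |xi p α| ≤ 1 := by
  have h := xi_circle p hp
  fin_cases α
  · show |xi p 0| ≤ 1
    simp [xi]
  · show |xi p 1| ≤ 1
    nlinarith [sq_abs (xi p 1), abs_nonneg (xi p 1), sq_nonneg (xi p 2)]
  · show |xi p 2| ≤ 1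
    nlinarith [sq_abs (xi p 2), abs_nonneg (xi p 2), sq_nonneg (xi p 1)]

lemma Yv_le (q : ℝ × ℝ × ℝ → ℝ) (p : ℝ × ℝ × ℝ) (α : Fin 3) :
    |Yv q p α| ≤ barNorm q p := by
  have h0 : (0:ℝ) ≤ barNorm q p := Real.sqrt_nonneg _
  have hb1 : |bd1 q p| ≤ barNorm q p := by
    rw [show barNorm q p = Real.sqrt (bd1 q p ^ 2 + bd2 q p ^ 2) from rfl,
      ← Real.sqrt_sq_eq_abs]
    exact Real.sqrt_le_sqrt (by nlinarith [sq_nonneg (bd2 q p)])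
  have hb2 : |bd2 q p| ≤ barNorm q p := by
    rw [show barNorm q p = Real.sqrt (bd1 q p ^ 2 + bd2 q p ^ 2) from rfl,
      ← Real.sqrt_sq_eq_abs]
    exact Real.sqrt_le_sqrt (by nlinarith [sq_nonneg (bd1 q p)])
  fin_cases α
  · show |(0:ℝ)| ≤ barNorm q p
    simpa using h0
  · exact hb1
  · exact hb2

lemma pd_le (q : ℝ × ℝ × ℝ → ℝ) (p : ℝ × ℝ × ℝ) (α : Fin 3) :
    |pd (e α) q p| ≤ gradNorm q p := by
  have key : ∀ i : Fin 3, |pd (e i) q p| ≤ gradNorm q p → |pd (e i) q p| ≤ gradNorm q p :=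
    fun _ h => h
  have H : ∀ i : Fin 3, pd (e i) q p ^ 2 ≤
      pd (e 0) q p ^ 2 + pd (e 1) q p ^ 2 + pd (e 2) q p ^ 2 := by
    intro i
    fin_cases i
    · show pd (e 0) q p ^ 2 ≤ _
      nlinarith [sq_nonneg (pd (e 1) q p), sq_nonneg (pd (e 2) q p)]
    · show pd (e 1) q p ^ 2 ≤ _
      nlinarith [sq_nonneg (pd (e 0) q p), sq_nonneg (pd (e 2) q p)]
    · show pd (e 2) q p ^ 2 ≤ _
      nlinarith [sq_nonneg (pd (e 0) q p), sq_nonneg (pd (e 1) q p)]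
  rw [show gradNorm q p = Real.sqrt (pd (e 0) q p ^ 2 + pd (e 1) q p ^ 2 + pd (e 2) q p ^ 2)
      from rfl, ← Real.sqrt_sq_eq_abs]
  exact Real.sqrt_le_sqrt (H α)

lemma prod4_diff (u v w z u' v' w' z' Du Bu Dv Bv Dw Bw Dz Bz : ℝ)
    (hu : |u| ≤ Bu) (hv : |v| ≤ Bv) (hw : |w| ≤ Bw) (hz : |z| ≤ Bz)
    (hu' : |u'| ≤ Bu) (hv' : |v'| ≤ Bv) (hw' : |w'| ≤ Bw) (hz' : |z'| ≤ Bz)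
    (hdu : |u - u'| ≤ Du) (hdv : |v - v'| ≤ Dv) (hdw : |w - w'| ≤ Dw) (hdz : |z - z'| ≤ Dz) :
    |u * v * w * z - u' * v' * w' * z'| ≤
      Du * Bv * Bw * Bz + Bu * Dv * Bw * Bz + Bu * Bv * Dw * Bz + Bu * Bv * Bw * Dz := by
  have hBu : 0 ≤ Bu := (abs_nonneg _).trans hu
  have hBv : 0 ≤ Bv := (abs_nonneg _).trans hv
  have hBw : 0 ≤ Bw := (abs_nonneg _).trans hw
  have hBz : 0 ≤ Bz := (abs_nonneg _).trans hz
  have hDu : 0 ≤ Du := (abs_nonneg _).trans hdu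
  have hDv : 0 ≤ Dv := (abs_nonneg _).trans hdv
  have hDw : 0 ≤ Dw := (abs_nonneg _).trans hdw
  have hDz : 0 ≤ Dz := (abs_nonneg _).trans hdz
  have key : u * v * w * z - u' * v' * w' * z' =
      (u - u') * v * w * z + u' * (v - v') * w * z + u' * v' * (w - w') * z
        + u' * v' * w' * (z - z') := by ring
  have h1 : |(u - u') * v * w * z| ≤ Du * Bv * Bw * Bz := by
    rw [abs_mul, abs_mul, abs_mul]; gcongr
  have h2 : |u' * (v - v') * w * z| ≤ Bu * Dv * Bw * Bz := by
    rw [abs_mul, abs_mul, abs_mul]; gcongr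
  have h3 : |u' * v' * (w - w') * z| ≤ Bu * Bv * Dw * Bz := by
    rw [abs_mul, abs_mul, abs_mul]; gcongr
  have h4 : |u' * v' * w' * (z - z')| ≤ Bu * Bv * Bw * Dz := by
    rw [abs_mul, abs_mul, abs_mul]; gcongr
  calc |u * v * w * z - u' * v' * w' * z'|
      = |(u - u') * v * w * z + u' * (v - v') * w * z + u' * v' * (w - w') * z
          + u' * v' * w' * (z - z')| := by rw [key]
    _ ≤ |(u - u') * v * w * z + u' * (v - v') * w * z + u' * v' * (w - w') * z|
          + |u' * v' * w' * (z - z')| := abs_add_le _ _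
    _ ≤ (|(u - u') * v * w * z + u' * (v - v') * w * z| + |u' * v' * (w - w') * z|)
          + |u' * v' * w' * (z - z')| := by gcongr; exact abs_add_le _ _
    _ ≤ ((|(u - u') * v * w * z| + |u' * (v - v') * w * z|) + |u' * v' * (w - w') * z|)
          + |u' * v' * w' * (z - z')| := by gcongr; exact abs_add_le _ _
    _ ≤ _ := by linarith

set_option maxHeartbeats 1600000 in
/-- Null-structure estimate for quartic null forms in 2 space dimensions. -/
theorem quartic_null_estimate (N : Fin 3 → Fin 3 → Fin 3 → Fin 3 → ℝ)
    (hnull : ∀ ξ : Fin 3 → ℝ, (ξ 0 = 1 ∨ ξ 0 = -1) → (ξ 1) ^ 2 + (ξ 2) ^ 2 = 1 →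
      (∑ α : Fin 3, ∑ β : Fin 3, ∑ μ : Fin 3, ∑ ν : Fin 3,
        N α β μ ν * ξ α * ξ β * ξ μ * ξ ν) = 0) :
    ∃ C : ℝ, 0 < C ∧
      ∀ f g h φ : ℝ × ℝ × ℝ → ℝ,
        ContDiff ℝ 1 f → ContDiff ℝ 1 g → ContDiff ℝ 1 h → ContDiff ℝ 1 φ →
        ∀ p : ℝ × ℝ × ℝ, p.2 ≠ 0 →
          |∑ α : Fin 3, ∑ β : Fin 3, ∑ μ : Fin 3, ∑ ν : Fin 3,
              N α β μ ν * pd (e α) f p * pd (e β) g p * pd (e μ) h p * pd (e ν) φ p|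
            ≤ C * (barNorm f p * gradNorm g p * gradNorm h p * gradNorm φ p
                + gradNorm f p * barNorm g p * gradNorm h p * gradNorm φ p
                + gradNorm f p * gradNorm g p * barNorm h p * gradNorm φ p
                + gradNorm f p * gradNorm g p * gradNorm h p * barNorm φ p) := by
  set K : ℝ := ∑ α : Fin 3, ∑ β : Fin 3, ∑ μ : Fin 3, ∑ ν : Fin 3, |N α β μ ν| with hKdef
  have hK : 0 ≤ K := by
    rw [hKdef]
    refine Finset.sum_nonneg fun α _ => Finset.sum_nonneg fun β _ =>
      Finset.sum_nonneg fun μ _ => Finset.sum_nonneg fun ν _ => abs_nonneg _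
  refine ⟨K + 1, by linarith, ?_⟩
  intro f g h φ _ _ _ _ p hp
  have hξ0 : xi p 0 = 1 := rfl
  have hξc := xi_circle p hp
  have hnull0 := hnull (xi p) (Or.inl hξ0) hξc
  set Af := pd (e 0) f p with hAf
  set Ag := pd (e 0) g p with hAg
  set Ah := pd (e 0) h p with hAh
  set Aφ := pd (e 0) φ p with hAφ
  set D : ℝ := barNorm f p * gradNorm g p * gradNorm h p * gradNorm φ p
      + gradNorm f p * barNorm g p * gradNorm h p * gradNorm φ p
      + gradNorm f p * gradNorm g p * barNorm h p * gradNorm φ p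
      + gradNorm f p * gradNorm g p * gradNorm h p * barNorm φ p with hDdef
  -- the pure-cone quadruple sum vanishes
  have hT : (∑ α : Fin 3, ∑ β : Fin 3, ∑ μ : Fin 3, ∑ ν : Fin 3,
      N α β μ ν * ((Af * xi p α) * (Ag * xi p β) * (Ah * xi p μ) * (Aφ * xi p ν))) = 0 := by
    calc (∑ α : Fin 3, ∑ β : Fin 3, ∑ μ : Fin 3, ∑ ν : Fin 3,
        N α β μ ν * ((Af * xi p α) * (Ag * xi p β) * (Ah * xi p μ) * (Aφ * xi p ν)))
        = (Af * Ag * Ah * Aφ) * ∑ α : Fin 3, ∑ β : Fin 3, ∑ μ : Fin 3, ∑ ν : Fin 3,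
            N α β μ ν * xi p α * xi p β * xi p μ * xi p ν := by
          simp only [Finset.mul_sum]
          refine Finset.sum_congr rfl fun α _ => Finset.sum_congr rfl fun β _ =>
            Finset.sum_congr rfl fun μ _ => Finset.sum_congr rfl fun ν _ => by ring
      _ = 0 := by rw [hnull0, mul_zero]
  -- rewrite the goal sum as a sum of differences
  have hS : (∑ α : Fin 3, ∑ β : Fin 3, ∑ μ : Fin 3, ∑ ν : Fin 3,
        N α β μ ν * pd (e α) f p * pd (e β) g p * pd (e μ) h p * pd (e ν) φ p)
      = ∑ α : Fin 3, ∑ β : Fin 3, ∑ μ : Fin 3, ∑ ν : Fin 3,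
          N α β μ ν * (pd (e α) f p * pd (e β) g p * pd (e μ) h p * pd (e ν) φ p
            - (Af * xi p α) * (Ag * xi p β) * (Ah * xi p μ) * (Aφ * xi p ν)) := by
    have expand : (∑ α : Fin 3, ∑ β : Fin 3, ∑ μ : Fin 3, ∑ ν : Fin 3,
        N α β μ ν * (pd (e α) f p * pd (e β) g p * pd (e μ) h p * pd (e ν) φ p
          - (Af * xi p α) * (Ag * xi p β) * (Ah * xi p μ) * (Aφ * xi p ν)))
        = (∑ α : Fin 3, ∑ β : Fin 3, ∑ μ : Fin 3, ∑ ν : Fin 3,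
            N α β μ ν * pd (e α) f p * pd (e β) g p * pd (e μ) h p * pd (e ν) φ p)
          - (∑ α : Fin 3, ∑ β : Fin 3, ∑ μ : Fin 3, ∑ ν : Fin 3,
              N α β μ ν * ((Af * xi p α) * (Ag * xi p β) * (Ah * xi p μ) * (Aφ * xi p ν))) := by
      simp only [mul_sub, Finset.sum_sub_distrib]
      congr 1
      refine Finset.sum_congr rfl fun α _ => Finset.sum_congr rfl fun β _ =>
        Finset.sum_congr rfl fun μ _ => Finset.sum_congr rfl fun ν _ => by ring
    rw [expand, hT, sub_zero]
  -- per-term bound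
  have hterm : ∀ α β μ ν : Fin 3,
      |pd (e α) f p * pd (e β) g p * pd (e μ) h p * pd (e ν) φ p
        - (Af * xi p α) * (Ag * xi p β) * (Ah * xi p μ) * (Aφ * xi p ν)| ≤ D := by
    intro α β μ ν
    have hA : ∀ (q : ℝ × ℝ × ℝ → ℝ) (i : Fin 3), |pd (e 0) q p * xi p i| ≤ gradNorm q p := by
      intro q i
      rw [abs_mul]
      calc |pd (e 0) q p| * |xi p i| ≤ gradNorm q p * 1 := by
            apply mul_le_mul (pd_le q p 0) (xi_le p hp i) (abs_nonneg _)
              ((abs_nonneg _).trans (pd_le q p 0))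
        _ = gradNorm q p := mul_one _
    have hd : ∀ (q : ℝ × ℝ × ℝ → ℝ) (i : Fin 3),
        |pd (e i) q p - pd (e 0) q p * xi p i| ≤ barNorm q p := by
      intro q i
      have : pd (e i) q p - pd (e 0) q p * xi p i = Yv q p i := by
        rw [xi_decomp q p i]; ring
      rw [this]; exact Yv_le q p i
    exact prod4_diff _ _ _ _ _ _ _ _ _ _ _ _ _ _ _ _
      (pd_le f p α) (pd_le g p β) (pd_le h p μ) (pd_le φ p ν)
      (hA f α) (hA g β) (hA h μ) (hA φ ν)
      (hd f α) (hd g β) (hd h μ) (hd φ ν)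
  have hD : 0 ≤ D := by
    have b1 : (0:ℝ) ≤ barNorm f p := Real.sqrt_nonneg _
    have b2 : (0:ℝ) ≤ barNorm g p := Real.sqrt_nonneg _
    have b3 : (0:ℝ) ≤ barNorm h p := Real.sqrt_nonneg _
    have b4 : (0:ℝ) ≤ barNorm φ p := Real.sqrt_nonneg _
    have g1 : (0:ℝ) ≤ gradNorm f p := Real.sqrt_nonneg _
    have g2 : (0:ℝ) ≤ gradNorm g p := Real.sqrt_nonneg _
    have g3 : (0:ℝ) ≤ gradNorm h p := Real.sqrt_nonneg _
    have g4 : (0:ℝ) ≤ gradNorm φ p := Real.sqrt_nonneg _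
    rw [hDdef]
    have := mul_nonneg (mul_nonneg (mul_nonneg b1 g2) g3) g4
    have := mul_nonneg (mul_nonneg (mul_nonneg g1 b2) g3) g4
    have := mul_nonneg (mul_nonneg (mul_nonneg g1 g2) b3) g4
    have := mul_nonneg (mul_nonneg (mul_nonneg g1 g2) g3) b4
    linarith
  calc |∑ α : Fin 3, ∑ β : Fin 3, ∑ μ : Fin 3, ∑ ν : Fin 3,
        N α β μ ν * pd (e α) f p * pd (e β) g p * pd (e μ) h p * pd (e ν) φ p|
      = |∑ α : Fin 3, ∑ β : Fin 3, ∑ μ : Fin 3, ∑ ν : Fin 3,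
          N α β μ ν * (pd (e α) f p * pd (e β) g p * pd (e μ) h p * pd (e ν) φ p
            - (Af * xi p α) * (Ag * xi p β) * (Ah * xi p μ) * (Aφ * xi p ν))| := by rw [hS]
    _ ≤ ∑ α : Fin 3, ∑ β : Fin 3, ∑ μ : Fin 3, ∑ ν : Fin 3,
          |N α β μ ν| * D := by
        refine le_trans (Finset.abs_sum_le_sum_abs _ _) (Finset.sum_le_sum fun α _ => ?_)
        refine le_trans (Finset.abs_sum_le_sum_abs _ _) (Finset.sum_le_sum fun β _ => ?_)
        refine le_trans (Finset.abs_sum_le_sum_abs _ _) (Finset.sum_le_sum fun μ _ => ?_)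
        refine le_trans (Finset.abs_sum_le_sum_abs _ _) (Finset.sum_le_sum fun ν _ => ?_)
        rw [abs_mul]
        exact mul_le_mul_of_nonneg_left (hterm α β μ ν) (abs_nonneg _)
    _ = K * D := by rw [hKdef]; simp only [← Finset.sum_mul]
    _ ≤ (K + 1) * D := by nlinarith
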